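/- Stationarity of the dual at λ = 1+ρ: let A(y,r) = log Σ_x P(x) W(y|x)^{1/r} and E_1(ρ,λ) = −log Σ_y exp( 2A(y,1+ρ) − (λ(1−ρ)/(1+ρ)) A(y,λ) ). Suppose A(y,λ) does not depend on y (write A(λ)); then for 0 < ρ ≤ 1, E_1(ρ,λ) = ((1−ρ)/(1+ρ))·λA(λ) − log|Y| − 2A(1+ρ), which is a convex function of λ on (0,∞), attaining its infimum over λ > 0 at the minimizer of λA(λ) (scaled by the nonnegative constant (1−ρ)/(1+ρ)). -/

import Mathlib

open Real Finset

/-! Writing `S(u) = ∑ₓ P(x) W(y|x)^u`, Hölder's inequality makes `log S` convex, and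
`λ A(λ) = λ log S(1/λ)` is its perspective, hence convex on `(0,∞)`. Since `A(y,λ)` does not
depend on `y`, all `|Y|` summands of `E₁` coincide, so `E₁` is the affine image
`((1-ρ)/(1+ρ)) λ A(λ) + const` of that function, with a nonnegative slope. -/

theorem Real.sum_rpow_mul_rpow_le {ι : Type*} (s : Finset ι) {f g : ι → ℝ}
    (hf : ∀ i ∈ s, 0 ≤ f i) (hg : ∀ i ∈ s, 0 ≤ g i) {a b : ℝ} (ha : 0 < a) (hb : 0 < b)
    (hab : a + b = 1) :
    ∑ i ∈ s, f i ^ a * g i ^ b ≤ (∑ i ∈ s, f i) ^ a * (∑ i ∈ s, g i) ^ b := by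
  have := inner_le_Lp_mul_Lq_of_nonneg s (Real.HolderConjugate.inv_inv ha hb hab)
    (fun i hi => rpow_nonneg (hf i hi) a) (fun i hi => rpow_nonneg (hg i hi) b)
  simp only [one_div, inv_inv] at this
  rwa [sum_congr rfl fun i hi => rpow_rpow_inv (hf i hi) ha.ne',
    sum_congr rfl fun i hi => rpow_rpow_inv (hg i hi) hb.ne'] at this

theorem convexOn_log_sum_mul_rpow {ι : Type*} [Fintype ι] [Nonempty ι] {p w : ι → ℝ}
    (hp : ∀ i, 0 < p i) (hw : ∀ i, 0 < w i) :
    ConvexOn ℝ Set.univ fun u : ℝ => log (∑ i, p i * w i ^ u) := by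
  have hterm : ∀ i (u : ℝ), 0 < p i * w i ^ u := fun i u =>
    mul_pos (hp i) (rpow_pos_of_pos (hw i) u)
  have hpos : ∀ u : ℝ, 0 < ∑ i, p i * w i ^ u := fun u =>
    sum_pos (fun i _ => hterm i u) univ_nonempty
  refine convexOn_iff_forall_pos.2 ⟨convex_univ, fun u _ v _ a b ha hb hab => ?_⟩
  have hsplit : ∀ i,
      p i * w i ^ (a • u + b • v) = (p i * w i ^ u) ^ a * (p i * w i ^ v) ^ b := by
    intro i
    have hw0 := (hw i).le
    rw [mul_rpow (hp i).le (rpow_nonneg hw0 _), mul_rpow (hp i).le (rpow_nonneg hw0 _),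
      ← rpow_mul hw0, ← rpow_mul hw0, mul_mul_mul_comm, ← rpow_add (hp i),
      ← rpow_add (hw i), hab, rpow_one, smul_eq_mul, smul_eq_mul, mul_comm a, mul_comm b]
  calc log (∑ i, p i * w i ^ (a • u + b • v))
      ≤ log ((∑ i, p i * w i ^ u) ^ a * (∑ i, p i * w i ^ v) ^ b) := by
        refine log_le_log (hpos _) ?_
        simp only [hsplit]
        exact sum_rpow_mul_rpow_le univ (fun i _ => (hterm i u).le) (fun i _ => (hterm i v).le)
          ha hb hab
    _ = a • log (∑ i, p i * w i ^ u) + b • log (∑ i, p i * w i ^ v) := by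
        rw [log_mul (rpow_pos_of_pos (hpos u) a).ne' (rpow_pos_of_pos (hpos v) b).ne',
          log_rpow (hpos u), log_rpow (hpos v), smul_eq_mul, smul_eq_mul]

theorem ConvexOn.mul_comp_inv {f : ℝ → ℝ} (hf : ConvexOn ℝ (Set.Ioi 0) f) :
    ConvexOn ℝ (Set.Ioi 0) fun x => x * f x⁻¹ := by
  refine convexOn_iff_forall_pos.2 ⟨convex_Ioi 0, fun x hx y hy a b ha hb hab => ?_⟩
  have hx : 0 < x := hx
  have hy : 0 < y := hy
  set m := a * x + b * y
  have hm : 0 < m := by positivity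
  have hcomb : (a * x / m) • x⁻¹ + (b * y / m) • y⁻¹ = m⁻¹ := by
    simp only [smul_eq_mul]; field_simp; linear_combination hab
  have hweights : a * x / m + b * y / m = 1 := by rw [← add_div]; exact div_self hm.ne'
  have key := hf.2 (inv_pos.2 hx) (inv_pos.2 hy) (by positivity) (by positivity) hweights
  rw [hcomb] at key
  simp only [smul_eq_mul] at key ⊢
  calc m * f m⁻¹ ≤ m * (a * x / m * f x⁻¹ + b * y / m * f y⁻¹) :=
        mul_le_mul_of_nonneg_left key hm.le
    _ = a * (x * f x⁻¹) + b * (y * f y⁻¹) := by field_simp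

theorem E1_symmetric_form_general {X Y : Type*} [Fintype X] [Nonempty X] [Fintype Y] [Nonempty Y]
    (P : X → ℝ) (hPpos : ∀ x, 0 < P x)
    (W : X → Y → ℝ) (hWpos : ∀ x y, 0 < W x y)
    (A : ℝ → ℝ)
    (hA : ∀ r : ℝ, 0 < r → ∀ y : Y, Real.log (∑ x, P x * W x y ^ (1 / r)) = A r)
    (ρ : ℝ) (hρ0 : 0 < ρ) (hρ1 : ρ ≤ 1) :
    (let E1 : ℝ → ℝ := fun l =>
      -Real.log (∑ y : Y, Real.exp (2 * A (1 + ρ) - l * (1 - ρ) / (1 + ρ) * A l));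
     (∀ l : ℝ, 0 < l →
        E1 l = (1 - ρ) / (1 + ρ) * (l * A l)
          - Real.log (Fintype.card Y) - 2 * A (1 + ρ))
     ∧ ConvexOn ℝ (Set.Ioi (0 : ℝ)) E1
     ∧ ∀ l₀ : ℝ, 0 < l₀ → (∀ l : ℝ, 0 < l → l₀ * A l₀ ≤ l * A l) →
        ∀ l : ℝ, 0 < l → E1 l₀ ≤ E1 l) := by
  intro E1
  set c := (1 - ρ) / (1 + ρ)
  have hc : 0 ≤ c := div_nonneg (by linarith) (by linarith)
  have hE1 : ∀ l, E1 l = c * (l * A l) - log (Fintype.card Y) - 2 * A (1 + ρ) := fun l => by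
    have hcard : (Fintype.card Y : ℝ) ≠ 0 := by exact_mod_cast Fintype.card_ne_zero
    simp only [E1, sum_const, card_univ, nsmul_eq_mul]
    rw [log_mul hcard (exp_ne_zero _), log_exp]
    ring
  obtain ⟨y₀⟩ := ‹Nonempty Y›
  have hconv : ConvexOn ℝ (Set.Ioi 0) fun l => l * A l :=
    ((convexOn_log_sum_mul_rpow hPpos (hWpos · y₀)).subset (Set.subset_univ _)
      (convex_Ioi 0)).mul_comp_inv.congr fun l hl => by rw [← hA l hl y₀, one_div]
  refine ⟨fun l _ => hE1 l, ?_, fun l₀ _ hmin l hl => ?_⟩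
  · refine ((hconv.smul hc).add_const (-log (Fintype.card Y) - 2 * A (1 + ρ))).congr
      fun l _ => ?_
    simp only [Pi.add_apply, smul_eq_mul, hE1]
    ring
  · rw [hE1, hE1]
    linarith [mul_le_mul_of_nonneg_left (hmin l hl) hc]

/-- For symmetric channels (`A(y,r)` independent of `y`), the dual objective
`E₁(ρ,λ)` equals `((1−ρ)/(1+ρ))·λA(λ) − log|Y| − 2A(1+ρ)`, is convex in `λ` on
`(0,∞)`, and attains its infimum at any minimizer of `λ·A(λ)`. -/
theorem E1_symmetric_form {X Y : Type*} [Fintype X] [Nonempty X] [Fintype Y] [Nonempty Y]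
    (P : X → ℝ) (hPpos : ∀ x, 0 < P x) (hPsum : ∑ x, P x = 1)
    (W : X → Y → ℝ) (hWpos : ∀ x y, 0 < W x y)
    (A : ℝ → ℝ)
    (hA : ∀ r : ℝ, 0 < r → ∀ y : Y, Real.log (∑ x, P x * W x y ^ (1 / r)) = A r)
    (ρ : ℝ) (hρ0 : 0 < ρ) (hρ1 : ρ ≤ 1) :
    (let E1 : ℝ → ℝ := fun l =>
      -Real.log (∑ y : Y, Real.exp (2 * A (1 + ρ) - l * (1 - ρ) / (1 + ρ) * A l));
     (∀ l : ℝ, 0 < l →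
        E1 l = (1 - ρ) / (1 + ρ) * (l * A l)
          - Real.log (Fintype.card Y) - 2 * A (1 + ρ))
     ∧ ConvexOn ℝ (Set.Ioi (0 : ℝ)) E1
     ∧ ∀ l₀ : ℝ, 0 < l₀ → (∀ l : ℝ, 0 < l → l₀ * A l₀ ≤ l * A l) →
        ∀ l : ℝ, 0 < l → E1 l₀ ≤ E1 l) :=
  E1_symmetric_form_general P hPpos W hWpos A hA ρ hρ0 hρ1
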